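/- arXiv:1910.06510 — 3 statements merged into one kernel-verified Lean document; each statement's English description precedes it below -/
import Mathlib

section
/- If an abelian length category A admits a maximal green sequence (a finite chain of torsion classes 0 = T₀ ⋖ T₁ ⋖ ⋯ ⋖ T_m = A where each step is a cover in the lattice of torsion classes), then A has only finitely many simple objects up to isomorphism. -/
open CategoryTheory CategoryTheory.Limits

universe v u

variable {C : Type u} [Category.{v} C] [Abelian C]

/-- `f, g` form a short exact sequence `0 ⟶ X₁ ⟶ X₂ ⟶ X₃ ⟶ 0`. -/
def IsSES {X₁ X₂ X₃ : C} (f : X₁ ⟶ X₂) (g : X₂ ⟶ X₃) : Prop :=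
  ∃ w : f ≫ g = 0, (CategoryTheory.ShortComplex.mk f g w).ShortExact

/-- A torsion pair `(T, F)`. -/
structure TorsionPairOn (T F : Set C) : Prop where
  hom_zero : ∀ X ∈ T, ∀ Y ∈ F, ∀ f : X ⟶ Y, f = 0
  mem_torsion : ∀ X : C, (∀ Y ∈ F, ∀ f : X ⟶ Y, f = 0) → X ∈ T
  mem_free : ∀ Y : C, (∀ X ∈ T, ∀ f : X ⟶ Y, f = 0) → Y ∈ F

def IsoClosed (S : Set C) : Prop := ∀ ⦃X Y : C⦄, (X ≅ Y) → X ∈ S → Y ∈ S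

def ExtClosedSet (S : Set C) : Prop :=
  ∀ ⦃X₁ X₂ X₃ : C⦄ (f : X₁ ⟶ X₂) (g : X₂ ⟶ X₃), IsSES f g → X₁ ∈ S → X₃ ∈ S → X₂ ∈ S

def QuotClosed (S : Set C) : Prop :=
  ∀ ⦃X Y : C⦄ (p : X ⟶ Y), Epi p → X ∈ S → Y ∈ S

structure IsTorsionClass (T : Set C) : Prop where
  zero_mem : ∀ X : C, IsZero X → X ∈ T
  iso_closed : IsoClosed T
  ext_closed : ExtClosedSet T
  quot_closed : QuotClosed T

/-- `T'` covers `T` in the lattice of torsion classes. -/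
def CoversTC (T T' : Set C) : Prop :=
  T ⊆ T' ∧ T ≠ T' ∧
    ∀ S : Set C, IsTorsionClass S → T ⊆ S → S ⊆ T' → S = T ∨ S = T'

/-- The extension closure of a class of objects. -/
inductive ExtClosure (S : Set C) : C → Prop
  | of (X : C) (h : X ∈ S) : ExtClosure S X
  | zero (X : C) (h : IsZero X) : ExtClosure S X
  | iso (X Y : C) (e : X ≅ Y) (h : ExtClosure S X) : ExtClosure S Y
  | ext (X₁ X₂ X₃ : C) (f : X₁ ⟶ X₂) (g : X₂ ⟶ X₃) (hseq : IsSES f g)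
      (h₁ : ExtClosure S X₁) (h₃ : ExtClosure S X₃) : ExtClosure S X₂

def IsBrick (X : C) : Prop := ¬ IsZero X ∧ ∀ f : X ⟶ X, f = 0 ∨ IsIso f

def IsIndec (X : C) : Prop :=
  ¬ IsZero X ∧ ∀ (Y Z : C), (X ≅ Y ⊞ Z) → IsZero Y ∨ IsZero Z

structure IsMinimalExtending (T : Set C) (M : C) : Prop where
  proper_quot_mem : ∀ ⦃Y : C⦄ (p : M ⟶ Y), Epi p → ¬ IsIso p → Y ∈ T
  ext_mem : ∀ ⦃X Tt : C⦄ (f : M ⟶ X) (g : X ⟶ Tt), IsSES f g → Tt ∈ T →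
      (¬ ∃ r : X ⟶ M, f ≫ r = 𝟙 M) → X ∈ T
  hom_zero : ∀ ⦃W : C⦄, W ∈ T → ∀ f : W ⟶ M, f = 0

/-- A finite filtration of `X` by subobjects. -/
structure FiltrationOf (X : C) where
  len : ℕ
  obj : Fin (len + 1) → C
  map : ∀ i : Fin len, obj i.castSucc ⟶ obj i.succ
  mono : ∀ i, Mono (map i)
  zero : IsZero (obj 0)
  top : obj (Fin.last len) ≅ X

noncomputable def FiltrationOf.subquot {X : C} (F : FiltrationOf X) (i : Fin F.len) : C :=
  cokernel (F.map i)

variable {P : Type*} [LinearOrder P]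

def Semistable (φ : C → P) (M : C) : Prop :=
  ¬ IsZero M ∧ ∀ ⦃L : C⦄ (f : L ⟶ M), Mono f → ¬ IsZero L → φ L ≤ φ M

def StableObj (φ : C → P) (M : C) : Prop :=
  ¬ IsZero M ∧ ∀ ⦃L : C⦄ (f : L ⟶ M), Mono f → ¬ IsZero L → ¬ IsIso f → φ L < φ M

structure IsStabilityFunction (φ : C → P) : Prop where
  iso_invariant : ∀ ⦃X Y : C⦄, (X ≅ Y) → φ X = φ Y
  seesaw : ∀ ⦃L M N : C⦄ (f : L ⟶ M) (g : M ⟶ N), IsSES f g →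
      ¬ IsZero L → ¬ IsZero M → ¬ IsZero N →
      (φ L = φ M ∧ φ M = φ N) ∨ (φ L < φ M ∧ φ M < φ N) ∨ (φ N < φ M ∧ φ M < φ L)

/-- A maximal green sequence of torsion classes. -/
structure IsMGS {C : Type u} [Category.{v} C] [Abelian C]
    (m : ℕ) (T : Fin (m + 1) → Set C) : Prop where
  tors : ∀ i, IsTorsionClass (T i)
  bot : ∀ X ∈ T 0, IsZero X
  top : ∀ X : C, X ∈ T (Fin.last m)
  cover : ∀ i : Fin m, CoversTC (T i.castSucc) (T i.succ)

/-!
Adjoining a simple object `S` to a torsion class `T` and closing under extensions already gives a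
torsion class, because every quotient of `S` is `0` or `S`. So if `T ⋖ T'` and `S ∈ T' \ T` is
simple, then `T'` is the extension closure of `T ∪ {S}`, and a simple object of that closure is
isomorphic to `S` or lies in `T`. Hence each cover of a maximal green sequence adds at most one
simple object up to isomorphism, and since `T₀ = 0` and `T_m` is everything, every simple object is
added by one of the `m` covers.
-/

lemma Fin.exists_not_castSucc_and_succ {n : ℕ} {p : Fin (n + 1) → Prop} (h₀ : ¬ p 0)
    (hlast : p (Fin.last n)) : ∃ i : Fin n, ¬ p i.castSucc ∧ p i.succ := by
  by_contra! h
  exact Fin.induction h₀ h (Fin.last n) hlast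

lemma isSES_cokernel {X Y : C} (ι : X ⟶ Y) [Mono ι] : IsSES ι (cokernel.π ι) :=
  ⟨cokernel.condition ι,
    { exact := ShortComplex.exact_of_g_is_cokernel _ (cokernelIsCokernel ι) }⟩

/-- `Y₁` is the image of `X₁` in `Y`. -/
lemma IsSES.exists_isSES_of_epi {X₁ X₂ X₃ Y : C} {f : X₁ ⟶ X₂} {g : X₂ ⟶ X₃} (h : IsSES f g)
    (p : X₂ ⟶ Y) [Epi p] :
    ∃ (Y₁ Y₃ : C) (f' : Y₁ ⟶ Y) (g' : Y ⟶ Y₃) (p₁ : X₁ ⟶ Y₁) (p₃ : X₃ ⟶ Y₃),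
      IsSES f' g' ∧ Epi p₁ ∧ Epi p₃ := by
  obtain ⟨_, hse⟩ := h
  have := hse.epi_g
  have hzero : f ≫ p ≫ cokernel.π (image.ι (f ≫ p)) = 0 := by
    simpa using (image.fac_assoc (f ≫ p) (cokernel.π (image.ι (f ≫ p)))).symm
  obtain ⟨r, hr⟩ := hse.exact.desc' _ hzero
  have : Epi (g ≫ r) := by rw [hr]; infer_instance
  exact ⟨_, _, image.ι (f ≫ p), cokernel.π _, factorThruImage (f ≫ p), r, isSES_cokernel _,
    inferInstance, epi_of_epi g r⟩

namespace ExtClosure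

lemma mem_of_subset {W S : Set C} (hS : IsTorsionClass S) (hWS : W ⊆ S) {X : C}
    (h : ExtClosure W X) : X ∈ S := by
  induction h with
  | of X hX => exact hWS hX
  | zero X hX => exact hS.zero_mem X hX
  | iso X Y e _ ih => exact hS.iso_closed e ih
  | ext X₁ X₂ X₃ f g hfg _ _ ih₁ ih₃ => exact hS.ext_closed f g hfg ih₁ ih₃

lemma of_epi {W : Set C} (hW : ∀ X ∈ W, ∀ ⦃Y : C⦄ (p : X ⟶ Y), Epi p → ExtClosure W Y)
    {X : C} (h : ExtClosure W X) : ∀ ⦃Y : C⦄ (p : X ⟶ Y), Epi p → ExtClosure W Y := by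
  induction h with
  | of X hX => exact hW X hX
  | zero X hX =>
    intro Y p _
    exact .zero Y (IsZero.of_epi_eq_zero p (hX.eq_of_src p 0))
  | iso X X' e _ ih =>
    intro Y p _
    exact ih (e.hom ≫ p) inferInstance
  | ext X₁ X₂ X₃ f g hfg _ _ ih₁ ih₃ =>
    intro Y p _
    obtain ⟨Y₁, Y₃, f', g', p₁, p₃, hfg', hp₁, hp₃⟩ := hfg.exists_isSES_of_epi p
    exact .ext _ Y _ f' g' hfg' (ih₁ p₁ hp₁) (ih₃ p₃ hp₃)

lemma isTorsionClass {W : Set C}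
    (hW : ∀ X ∈ W, ∀ ⦃Y : C⦄ (p : X ⟶ Y), Epi p → ExtClosure W Y) :
    IsTorsionClass {X : C | ExtClosure W X} where
  zero_mem := .zero
  iso_closed _ _ e h := .iso _ _ e h
  ext_closed _ _ _ f g hfg h₁ h₃ := .ext _ _ _ f g hfg h₁ h₃
  quot_closed _ _ p hp h := of_epi hW h p hp

lemma of_epi_of_mem_union_simple {T : Set C} (hT : QuotClosed T) {S X Y : C} [Simple S]
    (hX : X ∈ T ∪ {S}) (p : X ⟶ Y) [Epi p] : ExtClosure (T ∪ {S}) Y := by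
  rcases hX with hX | rfl
  · exact .of Y (.inl (hT p inferInstance hX))
  · by_cases hp : p = 0
    · exact .zero Y (IsZero.of_epi_eq_zero p hp)
    · have := isIso_of_epi_of_nonzero hp
      exact .iso _ Y (asIso p) (.of _ (.inr rfl))

lemma exists_iso_mem_of_simple {W : Set C} {X : C} (h : ExtClosure W X) [Simple X] :
    ∃ Y ∈ W, Nonempty (X ≅ Y) := by
  revert ‹Simple X›
  induction h with
  | of X hX => exact ⟨X, hX, ⟨Iso.refl X⟩⟩
  | zero X hX => exact absurd hX (Simple.not_isZero X)
  | iso X Y e _ ih =>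
    intro _
    have : Simple X := Simple.of_iso e
    obtain ⟨Z, hZ, ⟨e'⟩⟩ := ih
    exact ⟨Z, hZ, ⟨e.symm ≪≫ e'⟩⟩
  | ext X₁ X₂ X₃ f g hfg _ _ ih₁ ih₃ =>
    intro _
    obtain ⟨_, hse⟩ := hfg
    have := hse.mono_f
    have := hse.epi_g
    by_cases hf : f = 0
    · have : Mono g := hse.exact.mono_g hf
      have : IsIso g := isIso_of_mono_of_epi g
      have : Simple X₃ := Simple.of_iso (asIso g).symm
      obtain ⟨Z, hZ, ⟨e⟩⟩ := ih₃
      exact ⟨Z, hZ, ⟨asIso g ≪≫ e⟩⟩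
    · have := isIso_of_mono_of_nonzero hf
      have : Simple X₁ := Simple.of_iso (asIso f)
      obtain ⟨Z, hZ, ⟨e⟩⟩ := ih₁
      exact ⟨Z, hZ, ⟨(asIso f).symm ≪≫ e⟩⟩

end ExtClosure

namespace CoversTC

lemma eq_setOf_extClosure_union_simple {T T' : Set C} (h : CoversTC T T') (hT : QuotClosed T)
    (hT' : IsTorsionClass T') {S : C} [Simple S] (hS : S ∈ T') (hS' : S ∉ T) :
    T' = {X : C | ExtClosure (T ∪ {S}) X} := by
  have hsub : {X : C | ExtClosure (T ∪ {S}) X} ⊆ T' := fun _ hX =>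
    hX.mem_of_subset hT' (Set.union_subset h.1 (Set.singleton_subset_iff.2 hS))
  have htors := ExtClosure.isTorsionClass (W := T ∪ {S}) fun _ hX _ p _ =>
    ExtClosure.of_epi_of_mem_union_simple hT hX p
  rcases h.2.2 _ htors (fun X hX => .of X (.inl hX)) hsub with hE | hE
  · exact absurd (hE ▸ .of S (.inr rfl)) hS'
  · exact hE.symm

lemma nonempty_iso_of_simple {T T' : Set C} (h : CoversTC T T') (hT : IsTorsionClass T)
    (hT' : IsTorsionClass T') {X Y : C} [Simple X] [Simple Y] (hX : X ∈ T') (hX' : X ∉ T)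
    (hY : Y ∈ T') (hY' : Y ∉ T) : Nonempty (X ≅ Y) := by
  rw [h.eq_setOf_extClosure_union_simple hT.quot_closed hT' hY hY'] at hX
  obtain ⟨Z, hZ | rfl, ⟨e⟩⟩ := ExtClosure.exists_iso_mem_of_simple hX
  · exact absurd (hT.iso_closed e.symm hZ) hX'
  · exact ⟨e⟩

end CoversTC

open ZeroObject in
/-- if an abelian length category admits a maximal green sequence,
then it has only finitely many simple objects up to isomorphism. -/
theorem finitely_many_simples_of_mgs
    {C : Type u} [Category.{v} C] [Abelian C]
    [∀ X : C, IsNoetherianObject X] [∀ X : C, IsArtinianObject X]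
    (m : ℕ) (T : Fin (m + 1) → Set C) (hT : IsMGS m T) :
    ∃ (k : ℕ) (S : Fin k → C), ∀ X : C, Simple X → ∃ i, Nonempty (X ≅ S i) := by
  have : Nonempty C := ⟨0⟩
  let IsNewSimple (j : Fin m) (X : C) : Prop := Simple X ∧ X ∈ T j.succ ∧ X ∉ T j.castSucc
  refine ⟨m, fun j => Classical.epsilon (IsNewSimple j), fun X hX => ?_⟩
  obtain ⟨j, hX₀, hX₁⟩ := Fin.exists_not_castSucc_and_succ (p := (X ∈ T ·))
    (fun h => Simple.not_isZero X (hT.bot X h)) (hT.top X)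
  obtain ⟨hS, hS₁, hS₀⟩ : IsNewSimple j (Classical.epsilon (IsNewSimple j)) :=
    Classical.epsilon_spec ⟨X, hX, hX₁, hX₀⟩
  exact ⟨j, (hT.cover j).nonempty_iso_of_simple (hT.tors _) (hT.tors _) hX₁ hX₀ hS₁ hS₀⟩
end

section
/- Let N₁,…,N_m be a complete forward hom-orthogonal sequence in an abelian length category A and set G_i = Filt(N₁,…,N_i). Then each N_i is a minimal extending object for G_{i-1}, G_i = Filt(G_{i-1} ∪ {N_i}), and 0 = G₀ ⋖ G₁ ⋖ ⋯ ⋖ G_m = A is a maximal green sequence. -/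
/-! The key fact is that an object `X` with `Hom(X, Nₗ) = 0` for all `l ≥ i` lies in
`Filt(N₀, …, N_{i-1})`. Otherwise, since `X` is Noetherian, it has a quotient `B ∉ Filt` all of
whose proper quotients lie in `Filt`. Such a `B` is a brick (as `B` is Artinian), receives no
maps from the `Nⱼ` with `j < i` (by induction on `i`, their images in `B` lie in `Filt`) and
admits none to the `Nₗ` with `l ≥ i`; inserting `B` at position `i` contradicts maximality.
Consequently every quotient of `Nⱼ` lies in `Filt(N₀, …, Nⱼ)`, which makes each `Filt` a torsion
class, and a torsion class strictly above `Filt(N₀, …, N_{i-1})` inside `Filt(N₀, …, Nᵢ)` contains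
the image of a nonzero map to `Nᵢ`, hence `Nᵢ` itself, the cokernel being a proper quotient
of `Nᵢ`. -/

open CategoryTheory CategoryTheory.Limits

universe v u

variable {C : Type u} [Category.{v} C] [Abelian C]

variable {P : Type*} [LinearOrder P]

/-- A complete forward hom-orthogonal sequence of bricks. -/
structure IsCFHO {C : Type u} [Category.{v} C] [Abelian C]
    (m : ℕ) (N : Fin m → C) : Prop where
  brick : ∀ i, IsBrick (N i)
  forward_orth : ∀ i j : Fin m, i < j → ∀ f : N i ⟶ N j, f = 0
  maximal : ¬ ∃ (B : C) (k : ℕ), k ≤ m ∧ IsBrick B ∧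
      (∀ i : Fin m, i.val < k → ∀ f : N i ⟶ B, f = 0) ∧
      (∀ j : Fin m, k ≤ j.val → ∀ f : B ⟶ N j, f = 0)
  generates : ∀ T : Set C, IsTorsionClass T → (∀ i, N i ∈ T) → ∀ X : C, X ∈ T

theorem isSES_cokernel_π {A B : C} (f : A ⟶ B) [Mono f] : IsSES f (cokernel.π f) :=
  ⟨cokernel.condition f, ShortComplex.ShortExact.mk'
    (ShortComplex.exact_of_g_is_cokernel _ (cokernelIsCokernel f)) inferInstance inferInstance⟩

theorem IsSES.exists_desc {X₁ X₂ X₃ M : C} {f : X₁ ⟶ X₂} {g : X₂ ⟶ X₃} (h : IsSES f g)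
    (u : X₂ ⟶ M) (hu : f ≫ u = 0) : ∃ v : X₃ ⟶ M, g ≫ v = u :=
  have := h.2.epi_g
  h.2.exact.desc' u hu

omit [Abelian C] in
theorem isIso_of_mono_of_isArtinianObject {B : C} [IsArtinianObject B] (f : B ⟶ B) [Mono f] :
    IsIso f := by
  let φ := (Subobject.map f).obj
  have hφ : Monotone φ := (Subobject.map f).monotone
  let chain : ℕ →o (Subobject B)ᵒᵈ :=
    ⟨fun n => OrderDual.toDual (φ^[n] ⊤), Antitone.dual_right <| antitone_nat_of_succ_le fun n => by
      rw [Function.iterate_succ_apply]; exact hφ.iterate n le_top⟩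
  obtain ⟨n, hn⟩ := antitone_chain_condition_of_isArtinianObject chain
  have hstable : φ^[n] (φ ⊤) = φ^[n] ⊤ := by
    rw [← Function.iterate_succ_apply]; exact (hn (n + 1) n.le_succ).symm
  rw [Subobject.isIso_iff_mk_eq_top, ← Subobject.map_top]
  exact (Subobject.map_obj_injective f).iterate n hstable

theorem mono_of_kernelSubobject_comp_le {X B Y : C} (p : X ⟶ B) [Epi p] (q : B ⟶ Y)
    (h : kernelSubobject (p ≫ q) ≤ kernelSubobject p) : Mono q := by
  refine Preadditive.mono_of_cancel_zero q fun z hz => ?_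
  obtain ⟨A, e, _, x, hx⟩ := surjective_up_to_refinements_of_epi p z
  have hxq : x ≫ p ≫ q = 0 := by rw [← Category.assoc, ← hx, Category.assoc, hz, comp_zero]
  have hxp : x ≫ p = 0 := (kernelSubobject_factors_iff p x).1
    (Subobject.factors_of_le x h (kernelSubobject_factors _ x hxq))
  rw [← cancel_epi e, hx, hxp, comp_zero]

namespace ExtClosure

theorem trans {S S' : Set C} (h : ∀ Y ∈ S, ExtClosure S' Y) {X : C} (hX : ExtClosure S X) :
    ExtClosure S' X := by
  induction hX with
  | of X hX => exact h X hX
  | zero X hX => exact .zero X hX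
  | iso X Y e _ ih => exact .iso X Y e ih
  | ext X₁ X₂ X₃ f g hfg _ _ ih₁ ih₃ => exact .ext X₁ X₂ X₃ f g hfg ih₁ ih₃

theorem mono {S S' : Set C} (h : S ⊆ S') {X : C} (hX : ExtClosure S X) : ExtClosure S' X :=
  hX.trans fun Y hY => .of Y (h hY)

theorem hom_eq_zero {S : Set C} {M : C} (h : ∀ Y ∈ S, ∀ f : Y ⟶ M, f = 0) {X : C}
    (hX : ExtClosure S X) (f : X ⟶ M) : f = 0 := by
  induction hX with
  | of X hX => exact h X hX f
  | zero X hX => exact hX.eq_of_src f 0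
  | iso X Y e _ ih => exact (cancel_epi e.hom).1 (by rw [comp_zero]; exact ih _)
  | ext X₁ X₂ X₃ i p hip _ _ ih₁ ih₃ =>
    obtain ⟨v, rfl⟩ := hip.exists_desc f (ih₁ _)
    rw [ih₃ v, comp_zero]

theorem extClosedSet (S : Set C) : ExtClosedSet {X | ExtClosure S X} :=
  fun _ _ _ f g hfg h₁ h₃ => .ext _ _ _ f g hfg h₁ h₃

theorem quotClosed {S : Set C} (h : ∀ Y ∈ S, ∀ (Z : C) (p : Y ⟶ Z), Epi p → ExtClosure S Z) :
    QuotClosed {X | ExtClosure S X} := by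
  intro X Y p hp hX
  induction hX generalizing Y with
  | of X hX => exact h X hX Y p hp
  | zero X hX => exact .zero Y (hX.of_epi p)
  | iso X X' e _ ih => exact ih (e.hom ≫ p) (epi_comp _ _)
  | ext X₁ X₂ X₃ i q hiq _ _ ih₁ ih₃ =>
    -- `Y` is an extension of a quotient of `X₃` by the image of `X₁`
    let I := Abelian.image.ι (i ≫ p)
    obtain ⟨w, hw⟩ := hiq.exists_desc (p ≫ cokernel.π I) (calc
      i ≫ p ≫ cokernel.π I = (Abelian.factorThruImage (i ≫ p) ≫ I) ≫ cokernel.π I := by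
        rw [Abelian.image.fac, Category.assoc]
      _ = 0 := by simp)
    have : Epi w := epi_of_epi_fac hw
    exact .ext _ _ _ _ _ (isSES_cokernel_π I)
      (ih₁ (Abelian.factorThruImage (i ≫ p)) inferInstance) (ih₃ w this)

end ExtClosure

theorem IsTorsionClass.extClosure_subset {T S : Set C} (hT : IsTorsionClass T) (h : S ⊆ T) :
    {X | ExtClosure S X} ⊆ T := by
  intro X hX
  induction hX with
  | of X hX => exact h hX
  | zero X hX => exact hT.zero_mem X hX
  | iso X Y e _ ih => exact hT.iso_closed e ih
  | ext X₁ X₂ X₃ f g hfg _ _ ih₁ ih₃ => exact hT.ext_closed f g hfg ih₁ ih₃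

theorem isTorsionClass_extClosure {S : Set C}
    (h : ∀ Y ∈ S, ∀ (Z : C) (p : Y ⟶ Z), Epi p → ExtClosure S Z) :
    IsTorsionClass {X | ExtClosure S X} where
  zero_mem := .zero
  iso_closed _ _ e hX := .iso _ _ e hX
  ext_closed := ExtClosure.extClosedSet S
  quot_closed := ExtClosure.quotClosed h

def ProperQuotientsIn (T : Set C) (B : C) : Prop :=
  ∀ ⦃Y : C⦄ (q : B ⟶ Y), Epi q → ¬ IsIso q → Y ∈ T

theorem exists_epi_not_mem_properQuotientsIn {T : Set C} {X : C} [IsNoetherianObject X]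
    (hX : X ∉ T) : ∃ (B : C) (p : X ⟶ B), Epi p ∧ B ∉ T ∧ ProperQuotientsIn T B := by
  -- take a quotient outside `T` whose kernel is maximal
  obtain ⟨_, ⟨B, p, hp, hB, rfl⟩, hmax⟩ := (wellFounded_gt (α := Subobject X)).has_min
    {K | ∃ (B : C) (p : X ⟶ B), Epi p ∧ B ∉ T ∧ kernelSubobject p = K}
    ⟨_, X, 𝟙 X, inferInstance, hX, rfl⟩
  refine ⟨B, p, hp, hB, fun Y q hq hq' => by_contra fun hY => ?_⟩
  refine hmax _ ⟨Y, p ≫ q, epi_comp p q, hY, rfl⟩ <|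
    (kernelSubobject_comp_le p q).lt_of_ne fun h => hq' ?_
  have := mono_of_kernelSubobject_comp_le p q h.ge
  exact isIso_of_mono_of_epi q

theorem mem_of_image_mem {T : Set C} (hT : ExtClosedSet T) {B Y : C}
    (hB : ProperQuotientsIn T B) (h : Y ⟶ B) (h0 : h ≠ 0) (hI : Abelian.image h ∈ T) : B ∈ T := by
  let ι := Abelian.image.ι h
  refine hT _ _ (isSES_cokernel_π ι) hI (hB (cokernel.π ι) inferInstance fun hπ => h0 ?_)
  have hι : ι = 0 := by rw [← cancel_mono (cokernel.π ι), cokernel.condition, zero_comp]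
  calc h = Abelian.factorThruImage h ≫ ι := (Abelian.image.fac h).symm
    _ = 0 := by rw [hι, comp_zero]

theorem isBrick_of_properQuotientsIn {T : Set C} (hT0 : ∀ X, IsZero X → X ∈ T)
    (hT : ExtClosedSet T) {B : C} [IsArtinianObject B] (hB : B ∉ T) (hBq : ProperQuotientsIn T B) :
    IsBrick B := by
  refine ⟨fun h => hB (hT0 B h), fun f => or_iff_not_imp_left.2 fun hf => ?_⟩
  have hI : Abelian.image f ∉ T := fun hI => hB (mem_of_image_mem hT hBq f hf hI)
  have : IsIso (Abelian.factorThruImage f) := by_contra fun h =>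
    hI (hBq (Abelian.factorThruImage f) inferInstance h)
  have : Mono f := by rw [← Abelian.image.fac f]; infer_instance
  exact isIso_of_mono_of_isArtinianObject f

section CFHO

variable {m : ℕ} {N : Fin m → C}

variable (N) in
/-- `Filt(N₀, …, N_{i-1})`: the sequence is indexed from `0`, so this is the paper's `Gᵢ`. -/
def filt (i : ℕ) : Set C :=
  {X | ExtClosure {Y | ∃ j : Fin m, j.val < i ∧ Y = N j} X}

variable (N) in
def HomsToTailVanish (i : ℕ) (X : C) : Prop :=
  ∀ l : Fin m, i ≤ l.val → ∀ u : X ⟶ N l, u = 0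

theorem filt_mono : Monotone (filt N) := fun _ _ hii' _ hX =>
  hX.mono <| by rintro _ ⟨j, hj, rfl⟩; exact ⟨j, hj.trans_le hii', rfl⟩

theorem mem_filt {i : ℕ} {j : Fin m} (hj : j.val < i) : N j ∈ filt N i :=
  .of _ ⟨j, hj, rfl⟩

theorem filt_succ (i : Fin m) : filt N (i.val + 1) = {X | ExtClosure (filt N i ∪ {N i}) X} := by
  ext X
  refine ⟨ExtClosure.trans ?_, ExtClosure.trans ?_⟩
  · rintro _ ⟨j, hj, rfl⟩
    rcases (Nat.lt_succ_iff_lt_or_eq.1 hj) with hj | hj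
    · exact .of _ (.inl (mem_filt hj))
    · exact .of _ (.inr (congrArg N (Fin.ext hj)))
  · rintro Y (hY | rfl)
    · exact filt_mono i.val.le_succ hY
    · exact mem_filt i.val.lt_succ_self

namespace IsCFHO

theorem eq_zero_or_isIso (hN : IsCFHO m N) {i l : Fin m} (hil : i ≤ l) (f : N i ⟶ N l) :
    f = 0 ∨ IsIso f := by
  rcases hil.lt_or_eq with hil | rfl
  · exact .inl (hN.forward_orth i l hil f)
  · exact (hN.brick i).2 f

theorem homsToTailVanish_of_mem_filt (hN : IsCFHO m N) {i : ℕ} {X : C} (hX : X ∈ filt N i) :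
    HomsToTailVanish N i X := fun l hl =>
  ExtClosure.hom_eq_zero (by rintro _ ⟨j, hj, rfl⟩; exact hN.forward_orth j l (by omega)) hX

theorem homsToTailVanish_of_epi (hN : IsCFHO m N) {j : Fin m} {Y : C} (p : N j ⟶ Y) [Epi p]
    (hp : ¬ IsIso p) :
    HomsToTailVanish N j Y := fun _ hl u =>
  (hN.eq_zero_or_isIso (Fin.le_def.2 hl) (p ≫ u)).elim
    (fun h => (cancel_epi p).1 (h.trans comp_zero.symm))
    fun _ => absurd (have := mono_of_mono p u; isIso_of_mono_of_epi p) hp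

theorem quotient_mem_filt_succ (hN : IsCFHO m N) {j : Fin m}
    (hj : ∀ X, HomsToTailVanish N j X → X ∈ filt N j) {Y : C} (p : N j ⟶ Y) [Epi p] :
    Y ∈ filt N (j.val + 1) := by
  by_cases hp : IsIso p
  · exact .iso _ _ (asIso p) (mem_filt j.val.lt_succ_self)
  · exact filt_mono j.val.le_succ (hj Y (hN.homsToTailVanish_of_epi p hp))

variable [∀ X : C, IsNoetherianObject X] [∀ X : C, IsArtinianObject X]

theorem mem_filt_of_homsToTailVanish (hN : IsCFHO m N) {i : ℕ} (hi : i ≤ m) {X : C}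
    (hX : HomsToTailVanish N i X) : X ∈ filt N i := by
  induction i using Nat.strong_induction_on generalizing X with
  | _ i ih =>
  by_contra hXi
  obtain ⟨B, p, hp, hB, hBq⟩ := exists_epi_not_mem_properQuotientsIn hXi
  have hBN : HomsToTailVanish N i B := fun l hl u =>
    (cancel_epi p).1 ((hX l hl (p ≫ u)).trans comp_zero.symm)
  have hNB : ∀ j : Fin m, j.val < i → ∀ h : N j ⟶ B, h = 0 := fun j hj h => by_contra fun h0 =>
    hB <| mem_of_image_mem (ExtClosure.extClosedSet _) hBq h h0 <| filt_mono hj <|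
      hN.quotient_mem_filt_succ (fun _ => ih j hj (by omega)) (Abelian.factorThruImage h)
  have hBrick := isBrick_of_properQuotientsIn .zero (ExtClosure.extClosedSet _) hB hBq
  exact hN.maximal ⟨B, i, hi, hBrick, hNB, hBN⟩

theorem isTorsionClass_filt (hN : IsCFHO m N) (i : ℕ) : IsTorsionClass (filt N i) :=
  isTorsionClass_extClosure <| by
    rintro _ ⟨j, hj, rfl⟩ Y p hp
    exact filt_mono (Nat.succ_le_of_lt hj) <| hN.quotient_mem_filt_succ
      (fun _ => hN.mem_filt_of_homsToTailVanish j.isLt.le) p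

theorem isMinimalExtending (hN : IsCFHO m N) (i : Fin m) : IsMinimalExtending (filt N i) (N i) where
  proper_quot_mem _ p _ hp :=
    hN.mem_filt_of_homsToTailVanish i.isLt.le (hN.homsToTailVanish_of_epi p hp)
  ext_mem X _ f g hfg hT hsplit := by
    refine hN.mem_filt_of_homsToTailVanish i.isLt.le fun l hl u => ?_
    have hfu : f ≫ u = 0 := (hN.eq_zero_or_isIso (Fin.le_def.2 hl) (f ≫ u)).resolve_right
      fun _ => hsplit ⟨u ≫ inv (f ≫ u), by rw [← Category.assoc, IsIso.hom_inv_id]⟩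
    obtain ⟨v, rfl⟩ := hfg.exists_desc u hfu
    rw [hN.homsToTailVanish_of_mem_filt hT l hl v, comp_zero]
  hom_zero _ hW f := hN.homsToTailVanish_of_mem_filt hW i le_rfl f

theorem coversTC_filt (hN : IsCFHO m N) (i : Fin m) : CoversTC (filt N i) (filt N (i.val + 1)) := by
  have hNi : N i ∉ filt N i := fun h =>
    (hN.brick i).1 ((IsZero.iff_id_eq_zero _).2 ((hN.isMinimalExtending i).hom_zero h _))
  refine ⟨filt_mono i.val.le_succ, fun h => hNi (h ▸ mem_filt i.val.lt_succ_self),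
    fun S hS hlo hhi => or_iff_not_imp_left.2 fun hne => ?_⟩
  obtain ⟨X, hXS, hXi⟩ := Set.not_subset.1 fun h => hne (h.antisymm hlo)
  -- `X` maps nontrivially to some `Nₗ` with `l ≥ i`, and `X ∈ filt N (i + 1)` forces `l = i`
  obtain ⟨l, hil, u, hu⟩ : ∃ l : Fin m, i ≤ l ∧ ∃ u : X ⟶ N l, u ≠ 0 := by
    by_contra! h
    exact hXi (hN.mem_filt_of_homsToTailVanish i.isLt.le h)
  obtain rfl : l = i := by
    by_contra hli
    exact hu (hN.homsToTailVanish_of_mem_filt (hhi hXS) l (by omega) u)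
  have hNiS : N l ∈ S := mem_of_image_mem hS.ext_closed
    (fun _ q hq hq' => hlo ((hN.isMinimalExtending l).proper_quot_mem q hq hq')) u hu
    (hS.quot_closed (Abelian.factorThruImage u) inferInstance hXS)
  refine hhi.antisymm ?_
  rw [filt_succ]
  exact hS.extClosure_subset (Set.union_subset hlo (Set.singleton_subset_iff.2 hNiS))

theorem mem_filt_last (hN : IsCFHO m N) (X : C) : X ∈ filt N m :=
  hN.generates _ (hN.isTorsionClass_filt m) (fun j => mem_filt j.isLt) X

end IsCFHO

theorem isZero_of_mem_filt_zero {X : C} (hX : X ∈ filt N 0) : IsZero X :=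
  (IsZero.iff_id_eq_zero X).2 <| hX.hom_eq_zero (by rintro _ ⟨j, hj, -⟩; omega) _

end CFHO

/-- a complete forward hom-orthogonal sequence induces a maximal
green sequence via the extension closures of initial segments, and each brick is
a minimal extending object for the preceding torsion class. -/
theorem cfho_induces_mgs
    {C : Type u} [Category.{v} C] [Abelian C]
    [∀ X : C, IsNoetherianObject X] [∀ X : C, IsArtinianObject X]
    (m : ℕ) (N : Fin m → C) (hN : IsCFHO m N)
    (G : Fin (m + 1) → Set C)
    (hG : ∀ i : Fin (m + 1),
        G i = {X : C | ExtClosure {Y : C | ∃ j : Fin m, j.val < i.val ∧ Y = N j} X}) :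
    (∀ i : Fin m, IsMinimalExtending (G i.castSucc) (N i)) ∧
    (∀ i : Fin m, G i.succ = {X : C | ExtClosure (G i.castSucc ∪ {N i}) X}) ∧
    IsMGS m G := by
  obtain rfl : G = fun i => filt N i.val := funext hG
  exact ⟨hN.isMinimalExtending, filt_succ,
    { tors := fun i => hN.isTorsionClass_filt i
      bot := fun _ => isZero_of_mem_filt_zero
      top := hN.mem_filt_last
      cover := hN.coversTC_filt }⟩
end

section
/- Let (Q,w) be a non-degenerate quiver with potential with finite-dimensional Jacobian algebra, k a vertex, and (Q',w') = μ_k(Q,w). If N₁, N₂, …, N_m is a complete forward hom-orthogonal sequence in mod J(Q,w) with N₁ = S_k (the simple at k), then F_k⁺(N₂), …, F_k⁺(N_m), S'_k is a complete forward hom-orthogonal sequence in mod J(Q',w'), where F_k⁺ is the generalized reflection functor. -/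
open CategoryTheory CategoryTheory.Limits

universe v u

variable {C : Type u} [Category.{v} C] [Abelian C]

variable {P : Type*} [LinearOrder P]

/-
The functor `F` identifies `S^⊥` with `^⊥S'`, so brick-ness and forward hom-orthogonality of
`N 1, …, N (m-1)` transfer to their images, while `S'` receives no maps from `F(S^⊥)` and is
simple. A brick breaking maximality in `C'` either lies in `^⊥S'`, hence comes from a brick
breaking maximality of `N` in `C`, or receives no maps from the whole rotated sequence and is
zero by generation. For generation, a torsion class `T'` of `C'` containing the rotated sequence
pulls back to the torsion class of objects of `C` whose quotients in `S^⊥` are sent into `T'`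
by `F`. It contains every `N i`, hence is everything; so `T'` contains all simples of `C'`
(those in `^⊥S'` come from `S^⊥`, the others are `S'`), and therefore every object of finite
length. For extension-closedness, let `V ∈ S^⊥` be a quotient of the middle term and `A ⊆ V`
the image of the first; the largest subobject `R` of `V/A` filtered by `S` has a preimage `P`
in `V` with `F A ↠ F P`, and `V/P` lies in `S^⊥`.
-/

def HomVanishes (X Y : C) : Prop := ∀ f : X ⟶ Y, f = 0

namespace IsSES

variable {X₁ X₂ X₃ : C} {f : X₁ ⟶ X₂} {g : X₂ ⟶ X₃}

lemma epi (h : IsSES f g) : Epi g := h.choose_spec.epi_g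

lemma exists_desc_s18 (h : IsSES f g) {Z : C} (u : X₂ ⟶ Z) (hu : f ≫ u = 0) :
    ∃ v : X₃ ⟶ Z, g ≫ v = u :=
  have := h.epi
  h.choose_spec.exact.desc' u hu

lemma of_isLimit [Mono f] [Epi g] (w : f ≫ g = 0) (h : IsLimit (KernelFork.ofι f w)) :
    IsSES f g :=
  ⟨w, .mk' ((ShortComplex.mk f g w).exact_of_f_is_kernel h) inferInstance inferInstance⟩

end IsSES

lemma isSES_kernel_ι {X V : C} (q : X ⟶ V) [Epi q] : IsSES (kernel.ι q) q :=
  .of_isLimit (kernel.condition q) (kernelIsKernel q)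

namespace HomVanishes

lemma of_mono {S W X : C} (i : W ⟶ X) [Mono i] (h : HomVanishes S X) : HomVanishes S W :=
  fun f => (cancel_mono i).mp (by rw [h (f ≫ i), zero_comp])

lemma of_epi {X Y T : C} (p : X ⟶ Y) [Epi p] (h : HomVanishes X T) : HomVanishes Y T :=
  fun f => (cancel_epi p).mp (by rw [h (p ≫ f), comp_zero])

lemma of_isSES {X₁ X₂ X₃ D : C} {f : X₁ ⟶ X₂} {g : X₂ ⟶ X₃} (hfg : IsSES f g)
    (h₁ : HomVanishes X₁ D) (h₃ : HomVanishes X₃ D) : HomVanishes X₂ D := fun u => by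
  obtain ⟨v, rfl⟩ := hfg.exists_desc_s18 u (h₁ _)
  rw [h₃ v, comp_zero]

end HomVanishes

lemma isTorsionClass_setOf_homVanishes (B : C) : IsTorsionClass {Y | HomVanishes Y B} where
  zero_mem _ hX f := hX.eq_of_src f 0
  iso_closed _ _ e hX := hX.of_epi e.hom
  ext_closed _ _ _ _ _ hfg h₁ h₃ := .of_isSES hfg h₁ h₃
  quot_closed _ _ p _ hX := hX.of_epi p

lemma isBrick_of_simple (X : C) [Simple X] : IsBrick X :=
  ⟨Simple.not_isZero X, fun _ => or_iff_not_imp_left.mpr isIso_of_hom_simple⟩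

lemma IsBrick.of_iso {X Y : C} (e : X ≅ Y) (h : IsBrick X) : IsBrick Y := by
  refine ⟨fun hY => h.1 (hY.of_iso e), fun f => ?_⟩
  have hf : f = e.inv ≫ (e.hom ≫ f ≫ e.inv) ≫ e.hom := by simp
  rcases h.2 (e.hom ≫ f ≫ e.inv) with h0 | _
  · exact .inl (by rw [hf, h0, zero_comp, comp_zero])
  · exact .inr (by rw [hf]; infer_instance)

section Preimage

variable {Y S : C} (A : Subobject Y) (s : S ⟶ cokernel A.arrow)

/-- The inclusion of `A` into the preimage of `S ⊆ Y/A` in `Y`. -/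
noncomputable def subobjectToPullback : (A : C) ⟶ pullback (cokernel.π A.arrow) s :=
  pullback.lift A.arrow 0 (by rw [cokernel.condition, zero_comp])

@[simp]
lemma subobjectToPullback_fst : subobjectToPullback A s ≫ pullback.fst _ _ = A.arrow :=
  pullback.lift_fst _ _ _

@[simp]
lemma subobjectToPullback_snd : subobjectToPullback A s ≫ pullback.snd _ _ = 0 :=
  pullback.lift_snd _ _ _

instance : Mono (subobjectToPullback A s) := mono_of_mono_fac (subobjectToPullback_fst A s)

lemma isSES_subobjectToPullback : IsSES (subobjectToPullback A s) (pullback.snd _ s) := by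
  refine .of_isLimit _ (KernelFork.IsLimit.ofι' _ (subobjectToPullback_snd A s) fun t ht => ?_)
  have ht' : (t ≫ pullback.fst _ s) ≫ cokernel.π A.arrow = 0 := by
    rw [Category.assoc, pullback.condition, ← Category.assoc, ht, zero_comp]
  obtain ⟨l, hl⟩ := KernelFork.IsLimit.lift'
    (Abelian.monoIsKernelOfCokernel _ (cokernelIsCokernel A.arrow)) _ ht'
  refine ⟨l, pullback.hom_ext ?_ ?_⟩
  · simpa using hl
  · simp [ht]

lemma isSES_pullback_fst_cokernel [Mono s] :
    IsSES (pullback.fst (cokernel.π A.arrow) s) (cokernel.π A.arrow ≫ cokernel.π s) := by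
  have w : pullback.fst (cokernel.π A.arrow) s ≫ cokernel.π A.arrow ≫ cokernel.π s = 0 := by
    rw [pullback.condition_assoc, cokernel.condition, comp_zero]
  refine .of_isLimit w (KernelFork.IsLimit.ofι' _ w fun t ht => ?_)
  obtain ⟨u, hu⟩ := KernelFork.IsLimit.lift'
    (Abelian.monoIsKernelOfCokernel _ (cokernelIsCokernel s)) (t ≫ cokernel.π A.arrow)
    (by simpa using ht)
  exact ⟨pullback.lift t u hu.symm, pullback.lift_fst _ _ _⟩

/-- If the preimage were no larger than `A`, then `pullback.snd`, an epimorphism onto `S`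
composing with the mono `s` to zero, would vanish. -/
lemma lt_mk_pullback_fst [Mono s] (hS : ¬ IsZero S) :
    A < Subobject.mk (pullback.fst (cokernel.π A.arrow) s) := by
  refine lt_of_le_not_ge (Subobject.le_mk_of_comm _ (subobjectToPullback_fst A s)) fun hle => ?_
  have hsnd : pullback.snd (cokernel.π A.arrow) s = 0 := by
    rw [← cancel_mono s, ← pullback.condition, ← Subobject.ofMkLE_arrow hle, Category.assoc,
      cokernel.condition, comp_zero, zero_comp]
  exact hS (.of_epi_eq_zero _ hsnd)

end Preimage

lemma exists_subobject_gt_mem {T : Set C} (hiso : IsoClosed T) (hext : ExtClosedSet T)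
    {Y : C} {A : Subobject Y} (hA : (A : C) ∈ T) {S : C} (s : S ⟶ cokernel A.arrow) [Mono s]
    (hS : S ∈ T) (hS0 : ¬ IsZero S) : ∃ B : Subobject Y, A < B ∧ (B : C) ∈ T :=
  ⟨_, lt_mk_pullback_fst A s hS0,
    hiso (Subobject.underlyingIso _).symm (hext _ _ (isSES_subobjectToPullback A s) hA hS)⟩

lemma isZero_bot_subobject (Y : C) : IsZero ((⊥ : Subobject Y) : C) :=
  (isZero_zero C).of_iso Subobject.botCoeIsoZero

lemma exists_subobject_homVanishes_cokernel (S : C) [Simple S] (W : C) [IsNoetherianObject W] :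
    ∃ R : Subobject W, (∀ D, HomVanishes S D → HomVanishes (R : C) D) ∧
      HomVanishes S (cokernel R.arrow) := by
  let T : Set C := {X | ∀ D, HomVanishes S D → HomVanishes X D}
  have hiso : IsoClosed T := fun _ _ e hX D hD => (hX D hD).of_epi e.hom
  have hext : ExtClosedSet T := fun _ _ _ _ _ hfg h₁ h₃ D hD => .of_isSES hfg (h₁ D hD) (h₃ D hD)
  obtain ⟨R, hR, hmax⟩ := (wellFounded_gt (α := Subobject W)).has_min {R | (R : C) ∈ T}
    ⟨⊥, fun _ _ f => (isZero_bot_subobject W).eq_of_src f 0⟩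
  refine ⟨R, hR, fun f => by_contra fun hf => ?_⟩
  have := mono_of_nonzero_from_simple hf
  obtain ⟨B, hRB, hB⟩ := exists_subobject_gt_mem hiso hext hR f (fun _ hD => hD)
    (Simple.not_isZero S)
  exact hmax B hB hRB

lemma IsTorsionClass.mem_of_forall_simple_mem [∀ X : C, IsArtinianObject X] {T : Set C}
    (hT : IsTorsionClass T) (hsimple : ∀ S : C, Simple S → S ∈ T) (Y : C)
    [IsNoetherianObject Y] : Y ∈ T := by
  obtain ⟨A, hA, hmax⟩ := (wellFounded_gt (α := Subobject Y)).has_min {A | (A : C) ∈ T}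
    ⟨⊥, hT.zero_mem _ (isZero_bot_subobject Y)⟩
  suffices hA_top : A = ⊤ by
    subst hA_top
    exact hT.iso_closed (asIso (⊤ : Subobject Y).arrow) hA
  by_contra hA_top
  have hQ : ¬ IsZero (cokernel A.arrow) := fun hQ => by
    have := Abelian.epi_of_cokernel_π_eq_zero A.arrow (hQ.eq_of_tgt _ 0)
    have := isIso_of_mono_of_epi A.arrow
    exact hA_top (Subobject.eq_top_of_isIso_arrow A)
  obtain ⟨S, hS⟩ := exists_simple_subobject hQ
  obtain ⟨B, hAB, hB⟩ := exists_subobject_gt_mem hT.iso_closed hT.ext_closed hA S.arrow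
    (hsimple _ hS) (Simple.not_isZero _)
  exact hmax B hB hAB

section Rotation

variable {C' : Type*} [Category C']

def torsionComap (F : C ⥤ C') (S : C) (T' : Set C') : Set C :=
  {Z | ∀ (V : C) (q : Z ⟶ V), Epi q → HomVanishes S V → F.obj V ∈ T'}

lemma torsionComap_quotClosed (F : C ⥤ C') (S : C) (T' : Set C') :
    QuotClosed (torsionComap F S T') :=
  fun _ _ p _ hX V q _ hV => hX V (p ≫ q) inferInstance hV

variable [Abelian C']

/-- `F` restricts to an exact equivalence from `S^⊥` onto `^⊥S'`. -/
structure IsPerpEquivalence (S : C) (S' : C') (F : C ⥤ C') : Prop where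
  homVanishes_obj : ∀ X : C, HomVanishes S X → HomVanishes (F.obj X) S'
  map_bijective : ∀ X Y : C, HomVanishes S X → HomVanishes S Y →
    Function.Bijective (fun f : X ⟶ Y => F.map f)
  exists_obj_iso : ∀ Y : C', HomVanishes Y S' →
    ∃ X : C, HomVanishes S X ∧ Nonempty (F.obj X ≅ Y)
  isSES_map : ∀ ⦃X₁ X₂ X₃ : C⦄ (f : X₁ ⟶ X₂) (g : X₂ ⟶ X₃),
    HomVanishes S X₁ → HomVanishes S X₂ → HomVanishes S X₃ → IsSES f g →
    IsSES (F.map f) (F.map g)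

lemma self_mem_torsionComap (F : C ⥤ C') [F.Additive] (S : C) {T' : Set C'}
    (hT' : IsTorsionClass T') : S ∈ torsionComap F S T' :=
  fun _ q _ hV => hT'.zero_mem _ (F.map_isZero (.of_epi_eq_zero q (hV q)))

namespace IsPerpEquivalence

variable {S : C} {S' : C'} {F : C ⥤ C'}

lemma map_surjective (hF : IsPerpEquivalence S S' F) {X Y : C} (hX : HomVanishes S X)
    (hY : HomVanishes S Y) (g : F.obj X ⟶ F.obj Y) : ∃ f : X ⟶ Y, F.map f = g :=
  (hF.map_bijective X Y hX hY).surjective g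

lemma map_injective (hF : IsPerpEquivalence S S' F) {X Y : C} (hX : HomVanishes S X)
    (hY : HomVanishes S Y) {f g : X ⟶ Y} (h : F.map f = F.map g) : f = g :=
  (hF.map_bijective X Y hX hY).injective h

lemma map_eq_zero_iff [F.Additive] (hF : IsPerpEquivalence S S' F) {X Y : C}
    (hX : HomVanishes S X) (hY : HomVanishes S Y) (f : X ⟶ Y) : F.map f = 0 ↔ f = 0 :=
  ⟨fun h => hF.map_injective hX hY (by rw [h, F.map_zero]), fun h => by rw [h, F.map_zero]⟩

lemma isIso_map_iff (hF : IsPerpEquivalence S S' F) {X Y : C} (hX : HomVanishes S X)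
    (hY : HomVanishes S Y) (f : X ⟶ Y) : IsIso (F.map f) ↔ IsIso f := by
  refine ⟨fun _ => ?_, fun _ => inferInstance⟩
  obtain ⟨g, hg⟩ := hF.map_surjective hY hX (inv (F.map f))
  exact ⟨g, hF.map_injective hX hX (by simp [hg]), hF.map_injective hY hY (by simp [hg])⟩

lemma homVanishes_obj_iff [F.Additive] (hF : IsPerpEquivalence S S' F) {X Y : C}
    (hX : HomVanishes S X) (hY : HomVanishes S Y) :
    HomVanishes (F.obj X) (F.obj Y) ↔ HomVanishes X Y := by
  refine ⟨fun h f => (hF.map_eq_zero_iff hX hY f).mp (h _), fun h g => ?_⟩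
  obtain ⟨f, rfl⟩ := hF.map_surjective hX hY g
  exact (hF.map_eq_zero_iff hX hY f).mpr (h f)

lemma isBrick_obj_iff [F.Additive] (hF : IsPerpEquivalence S S' F) {X : C}
    (hX : HomVanishes S X) : IsBrick (F.obj X) ↔ IsBrick X := by
  have hzero : IsZero (F.obj X) ↔ IsZero X := by
    simp only [IsZero.iff_id_eq_zero, ← F.map_id, hF.map_eq_zero_iff hX hX]
  have hend : (∀ g : F.obj X ⟶ F.obj X, g = 0 ∨ IsIso g) ↔ ∀ f : X ⟶ X, f = 0 ∨ IsIso f := by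
    refine ⟨fun h f => ?_, fun h g => ?_⟩
    · rw [← hF.map_eq_zero_iff hX hX, ← hF.isIso_map_iff hX hX]
      exact h _
    · obtain ⟨f, rfl⟩ := hF.map_surjective hX hX g
      rw [hF.map_eq_zero_iff hX hX, hF.isIso_map_iff hX hX]
      exact h f
  exact and_congr (not_congr hzero) hend

lemma epi_map (hF : IsPerpEquivalence S S' F) {Z V : C} (q : Z ⟶ V) [Epi q]
    (hZ : HomVanishes S Z) (hV : HomVanishes S V) : Epi (F.map q) :=
  (hF.isSES_map _ q (hZ.of_mono (kernel.ι q)) hZ hV (isSES_kernel_ι q)).epi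

/-- The cokernel of `F.map k` lies in `^⊥S'`, so it is `F D` for some `D ∈ S^⊥`; the
projection onto it lifts to a map `P ⟶ D` killing `A`, which vanishes since `R ∈ ^⊥(S^⊥)`. -/
lemma epi_map_of_isSES [F.Additive] (hF : IsPerpEquivalence S S' F) {A P R : C}
    {k : A ⟶ P} {p : P ⟶ R} (hkp : IsSES k p) (hA : HomVanishes S A) (hP : HomVanishes S P)
    (hR : ∀ D, HomVanishes S D → HomVanishes R D) : Epi (F.map k) := by
  apply Abelian.epi_of_cokernel_π_eq_zero
  obtain ⟨D, hD, ⟨e⟩⟩ :=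
    hF.exists_obj_iso _ ((hF.homVanishes_obj P hP).of_epi (cokernel.π (F.map k)))
  obtain ⟨h, hh⟩ := hF.map_surjective hP hD (cokernel.π (F.map k) ≫ e.inv)
  have hkh : k ≫ h = 0 := (hF.map_eq_zero_iff hA hD _).mp (by simp [hh])
  obtain ⟨u, rfl⟩ := hkp.exists_desc_s18 h hkh
  rw [← cancel_mono e.inv, zero_comp, ← hh, hR D hD u, comp_zero, F.map_zero]

lemma mem_torsionComap_of_homVanishes (hF : IsPerpEquivalence S S' F) {T' : Set C'}
    (hT' : IsTorsionClass T') {Z : C} (hZ : HomVanishes S Z) (hFZ : F.obj Z ∈ T') :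
    Z ∈ torsionComap F S T' :=
  fun _ q _ hV => hT'.quot_closed _ (hF.epi_map q hZ hV) hFZ

lemma simple_mem_of_forall_mem_torsionComap (hF : IsPerpEquivalence S S' F) [Simple S']
    {T' : Set C'} (hT' : IsTorsionClass T') (hS' : S' ∈ T')
    (hall : ∀ X : C, X ∈ torsionComap F S T') (Y : C') [Simple Y] : Y ∈ T' := by
  by_cases hY : HomVanishes Y S'
  · obtain ⟨X, hX, ⟨e⟩⟩ := hF.exists_obj_iso Y hY
    exact hT'.iso_closed e (hall X X (𝟙 X) inferInstance hX)
  · simp only [HomVanishes, not_forall] at hY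
    obtain ⟨g, hg⟩ := hY
    have := isIso_of_hom_simple hg
    exact hT'.iso_closed (asIso g).symm hS'

variable [F.Additive] [Simple S] [∀ X : C, IsNoetherianObject X]

lemma obj_mem_of_subobject (hF : IsPerpEquivalence S S' F) {T' : Set C'}
    (hT' : IsTorsionClass T') {V : C} (hV : HomVanishes S V) (A : Subobject V)
    (hA : F.obj (A : C) ∈ T') (hcoker : cokernel A.arrow ∈ torsionComap F S T') :
    F.obj V ∈ T' := by
  obtain ⟨R, hR, hfree⟩ := exists_subobject_homVanishes_cokernel S (cokernel A.arrow)
  have hP : HomVanishes S (pullback (cokernel.π A.arrow) R.arrow) := hV.of_mono (pullback.fst _ _)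
  have hFP : F.obj (pullback (cokernel.π A.arrow) R.arrow) ∈ T' :=
    hT'.quot_closed _
      (hF.epi_map_of_isSES (isSES_subobjectToPullback A R.arrow) (hV.of_mono A.arrow) hP hR) hA
  exact hT'.ext_closed _ _ (hF.isSES_map _ _ hP hV hfree (isSES_pullback_fst_cokernel A R.arrow))
    hFP (hcoker _ (cokernel.π R.arrow) inferInstance hfree)

lemma isTorsionClass_torsionComap (hF : IsPerpEquivalence S S' F) {T' : Set C'}
    (hT' : IsTorsionClass T') : IsTorsionClass (torsionComap F S T') where
  zero_mem _ hX _ q _ _ := hT'.zero_mem _ (F.map_isZero (.of_epi_eq_zero q (hX.eq_of_src _ _)))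
  iso_closed _ _ e hX V q _ hV := hX V (e.hom ≫ q) inferInstance hV
  ext_closed X₁ X₂ X₃ f g hfg h₁ h₃ V q _ hV := by
    let A := imageSubobject (f ≫ q)
    have hA : F.obj (A : C) ∈ T' :=
      h₁ _ (factorThruImageSubobject (f ≫ q)) inferInstance (hV.of_mono A.arrow)
    obtain ⟨v, hv⟩ := hfg.exists_desc_s18 (q ≫ cokernel.π A.arrow) (by
      rw [← Category.assoc, ← imageSubobject_arrow_comp (f ≫ q), Category.assoc,
        cokernel.condition, comp_zero])
    have : Epi v := epi_of_epi_fac hv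
    exact hF.obj_mem_of_subobject hT' hV A hA (torsionComap_quotClosed F S T' v inferInstance h₃)
  quot_closed := torsionComap_quotClosed F S T'

end IsPerpEquivalence

end Rotation

section RotateSeq

variable {𝒜 𝒜' : Type*} [Category 𝒜] [Category 𝒜']

def rotateSeq (F : 𝒜 ⥤ 𝒜') (S' : 𝒜') {m : ℕ} (N : Fin m → 𝒜) : Fin m → 𝒜' :=
  fun i => if h : (i : ℕ) + 1 < m then F.obj (N ⟨(i : ℕ) + 1, h⟩) else S'

variable {F : 𝒜 ⥤ 𝒜'} {S' : 𝒜'} {m : ℕ} {N : Fin m → 𝒜}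

lemma rotateSeq_of_lt {i : Fin m} (h : (i : ℕ) + 1 < m) :
    rotateSeq F S' N i = F.obj (N ⟨(i : ℕ) + 1, h⟩) :=
  dif_pos h

lemma rotateSeq_of_not_lt {i : Fin m} (h : ¬ (i : ℕ) + 1 < m) : rotateSeq F S' N i = S' :=
  dif_neg h

lemma rotateSeq_pred (j : Fin m) (hj : 0 < (j : ℕ)) :
    rotateSeq F S' N ⟨(j : ℕ) - 1, by omega⟩ = F.obj (N j) := by
  rw [rotateSeq_of_lt (by simp only; omega)]
  congr 2
  exact Fin.ext (Nat.sub_add_cancel hj)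

lemma rotateSeq_last (hm : 0 < m) : rotateSeq F S' N ⟨m - 1, by omega⟩ = S' :=
  rotateSeq_of_not_lt (by simp only; omega)

end RotateSeq

namespace IsCFHO

variable {C' : Type*} [Category C'] [Abelian C'] {F : C ⥤ C'} {S' : C'} {m : ℕ} {N : Fin m → C}

lemma homVanishes_head (hN : IsCFHO m N) (hm : 0 < m) {j : Fin m} (hj : 0 < (j : ℕ)) :
    HomVanishes (N ⟨0, hm⟩) (N j) :=
  hN.forward_orth _ _ hj

variable [F.Additive]

lemma rotateSeq_brick (hN : IsCFHO m N) (hm : 0 < m) (hF : IsPerpEquivalence (N ⟨0, hm⟩) S' F)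
    [Simple S'] (i : Fin m) : IsBrick (rotateSeq F S' N i) := by
  by_cases h : (i : ℕ) + 1 < m
  · rw [rotateSeq_of_lt h, hF.isBrick_obj_iff (hN.homVanishes_head hm (Nat.succ_pos _))]
    exact hN.brick _
  · rw [rotateSeq_of_not_lt h]
    exact isBrick_of_simple S'

lemma rotateSeq_forward_orth (hN : IsCFHO m N) (hm : 0 < m)
    (hF : IsPerpEquivalence (N ⟨0, hm⟩) S' F) (i j : Fin m) (hij : i < j) :
    HomVanishes (rotateSeq F S' N i) (rotateSeq F S' N j) := by
  have hij' : (i : ℕ) < j := hij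
  have hi : (i : ℕ) + 1 < m := by omega
  have hfree (k : Fin m) (hk : (k : ℕ) + 1 < m) :=
    hN.homVanishes_head hm (j := ⟨_, hk⟩) k.succ_pos
  rw [rotateSeq_of_lt hi]
  by_cases hj : (j : ℕ) + 1 < m
  · rw [rotateSeq_of_lt hj, hF.homVanishes_obj_iff (hfree i hi) (hfree j hj)]
    exact hN.forward_orth _ _ (Nat.succ_lt_succ hij')
  · rw [rotateSeq_of_not_lt hj]
    exact hF.homVanishes_obj _ (hfree i hi)

lemma rotateSeq_generates (hN : IsCFHO m N) (hm : 0 < m) [Simple (N ⟨0, hm⟩)] [Simple S']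
    [∀ X : C, IsNoetherianObject X] [∀ X : C', IsNoetherianObject X]
    [∀ X : C', IsArtinianObject X] (hF : IsPerpEquivalence (N ⟨0, hm⟩) S' F) (T' : Set C')
    (hT' : IsTorsionClass T') (hmem : ∀ i, rotateSeq F S' N i ∈ T') (Y : C') : Y ∈ T' := by
  have hall : ∀ X : C, X ∈ torsionComap F (N ⟨0, hm⟩) T' := by
    refine hN.generates _ (hF.isTorsionClass_torsionComap hT') fun j => ?_
    rcases Nat.eq_zero_or_pos j with hj | hj
    · rw [show j = ⟨0, hm⟩ from Fin.ext hj]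
      exact self_mem_torsionComap F _ hT'
    · have hFN := hmem ⟨j - 1, by omega⟩
      rw [rotateSeq_pred j hj] at hFN
      exact hF.mem_torsionComap_of_homVanishes hT' (hN.homVanishes_head hm hj) hFN
  have hS' := hmem ⟨m - 1, by omega⟩
  rw [rotateSeq_last hm] at hS'
  exact hT'.mem_of_forall_simple_mem
    (fun Y _ => hF.simple_mem_of_forall_mem_torsionComap hT' hS' hall Y) Y

lemma rotateSeq_maximal (hN : IsCFHO m N) (hm : 0 < m) (hF : IsPerpEquivalence (N ⟨0, hm⟩) S' F)
    (hgen : ∀ T' : Set C', IsTorsionClass T' → (∀ i, rotateSeq F S' N i ∈ T') → ∀ Y, Y ∈ T') :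
    ¬ ∃ (B : C') (k : ℕ), k ≤ m ∧ IsBrick B ∧
      (∀ i : Fin m, i.val < k → HomVanishes (rotateSeq F S' N i) B) ∧
      (∀ j : Fin m, k ≤ j.val → HomVanishes B (rotateSeq F S' N j)) := by
  rintro ⟨B', k, hkm, hB', hleft, hright⟩
  rcases hkm.lt_or_eq with hk | rfl
  · have hperp := hright ⟨m - 1, by omega⟩ (by simp only; omega)
    rw [rotateSeq_last hm] at hperp
    obtain ⟨B, hB, ⟨e⟩⟩ := hF.exists_obj_iso B' hperp
    refine hN.maximal ⟨B, k + 1, hk, (hF.isBrick_obj_iff hB).mp (hB'.of_iso e.symm),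
      fun i hi => ?_, fun j hj => ?_⟩
    · rcases Nat.eq_zero_or_pos i with h0 | hpos
      · rw [show i = ⟨0, hm⟩ from Fin.ext h0]
        exact hB
      · have := hleft ⟨i - 1, by omega⟩ (by simp only; omega)
        rw [rotateSeq_pred i hpos] at this
        exact (hF.homVanishes_obj_iff (hN.homVanishes_head hm hpos) hB).mp (this.of_mono e.hom)
    · have hpos : 0 < (j : ℕ) := by omega
      have := hright ⟨j - 1, by omega⟩ (by simp only; omega)
      rw [rotateSeq_pred j hpos] at this
      exact (hF.homVanishes_obj_iff hB (hN.homVanishes_head hm hpos)).mp (this.of_epi e.inv)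
  · exact hB'.1 ((IsZero.iff_id_eq_zero _).mpr
      (hgen _ (isTorsionClass_setOf_homVanishes B') (fun i => hleft i i.isLt) B' (𝟙 B')))

theorem rotate (hN : IsCFHO m N) (hm : 0 < m) [Simple (N ⟨0, hm⟩)] [Simple S']
    [∀ X : C, IsNoetherianObject X] [∀ X : C', IsNoetherianObject X]
    [∀ X : C', IsArtinianObject X] (hF : IsPerpEquivalence (N ⟨0, hm⟩) S' F) :
    IsCFHO m (rotateSeq F S' N) :=
  ⟨hN.rotateSeq_brick hm hF, hN.rotateSeq_forward_orth hm hF,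
    hN.rotateSeq_maximal hm hF (hN.rotateSeq_generates hm hF), hN.rotateSeq_generates hm hF⟩

end IsCFHO

/-- Rotation Lemma: let `C = mod J(Q,w)` and `C' = mod J(Q',w')`
for a mutation `(Q',w') = μₖ(Q,w)` of a non-degenerate quiver with potential with
finite-dimensional Jacobian algebra; these are abelian length categories with
simples `Sₖ ∈ C`, `S'ₖ ∈ C'`, and the generalized reflection functor
`Fₖ⁺ : C ⥤ C'` restricts to an exact equivalence `Sₖ^⊥ ≃ ^⊥S'ₖ`
(Buan–Iyama–Reiten–Smith, Mozgovoy); these properties are taken as hypotheses.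
If `N 0, …, N (m-1)` is a CFHO sequence in `C` with `N 0 = Sₖ`, then
`Fₖ⁺(N 1), …, Fₖ⁺(N (m-1)), S'ₖ` is a CFHO sequence in `C'`. -/
theorem rotation_lemma
    {C : Type u} [Category.{v} C] [Abelian C]
    [∀ X : C, IsNoetherianObject X] [∀ X : C, IsArtinianObject X]
    {C' : Type u'} [Category.{v'} C'] [Abelian C']
    [∀ X : C', IsNoetherianObject X] [∀ X : C', IsArtinianObject X]
    (Sk : C) (hSk : Simple Sk) (Sk' : C') (hSk' : Simple Sk')
    (F : C ⥤ C') [F.Additive]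
    -- `F` sends `Sₖ^⊥` into `^⊥S'ₖ`:
    (hperp : ∀ X : C, (∀ f : Sk ⟶ X, f = 0) → ∀ g : F.obj X ⟶ Sk', g = 0)
    -- `F` is fully faithful on `Sₖ^⊥`:
    (hff : ∀ X Y : C, (∀ f : Sk ⟶ X, f = 0) → (∀ f : Sk ⟶ Y, f = 0) →
        Function.Bijective (fun f : X ⟶ Y => F.map f))
    -- every object of `^⊥S'ₖ` comes from `Sₖ^⊥`:
    (hess : ∀ Y : C', (∀ g : Y ⟶ Sk', g = 0) →
        ∃ X : C, (∀ f : Sk ⟶ X, f = 0) ∧ Nonempty (F.obj X ≅ Y))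
    -- `F` preserves short exact sequences with terms in `Sₖ^⊥`:
    (hexact : ∀ ⦃X₁ X₂ X₃ : C⦄ (f : X₁ ⟶ X₂) (g : X₂ ⟶ X₃),
        (∀ f' : Sk ⟶ X₁, f' = 0) → (∀ f' : Sk ⟶ X₂, f' = 0) →
        (∀ f' : Sk ⟶ X₃, f' = 0) → IsSES f g → IsSES (F.map f) (F.map g))
    (m : ℕ) (hm : 0 < m) (N : Fin m → C) (hN : IsCFHO m N)
    (hN0 : N ⟨0, hm⟩ = Sk) :
    IsCFHO m (fun i : Fin m =>
      if h : (i : ℕ) + 1 < m then F.obj (N ⟨(i : ℕ) + 1, h⟩) else Sk') := by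
  subst hN0
  have := hSk
  have := hSk'
  exact hN.rotate hm ⟨hperp, hff, hess, hexact⟩
end
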